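/- If the run from o terminates at d, then the run profile x(G,o,d) is the unique switching flow minimizing the total sum Σ_e x(e) over all switching flows; indeed it is the least element of the set of switching flows under the componentwise order. -/

import Mathlib

open scoped Classical

/-- A switch graph: every vertex has an even successor `s0 v` and an odd successor `s1 v`. -/
structure SwitchGraph (V : Type) where
  s0 : V → V
  s1 : V → V

namespace SwitchGraph

variable {V : Type}

/-- The successor of `v` along the edge of parity `b` (`false` = even, `true` = odd). -/
def succ (G : SwitchGraph V) (v : V) (b : Bool) : V :=
  if b then G.s1 v else G.s0 v

/-- One step of the run: move to the currently active successor and flip the switch. -/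
def step [DecidableEq V] (G : SwitchGraph V) (p : V × (V → Bool)) : V × (V → Bool) :=
  (G.succ p.1 (p.2 p.1), Function.update p.2 p.1 (!p.2 p.1))

/-- The state of the run after `n` steps, starting at `o` with all switches even,
stopping (freezing) upon reaching `d`. -/
def run [DecidableEq V] (G : SwitchGraph V) (o d : V) (n : ℕ) : V × (V → Bool) :=
  (fun p => if p.1 = d then p else G.step p)^[n] (o, fun _ => false)

/-- The run from `o` terminates at `d`. -/
def Terminates [DecidableEq V] (G : SwitchGraph V) (o d : V) : Prop :=
  ∃ n, (G.run o d n).1 = d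

/-- Number of traversals of the outgoing edge of `v` of parity `b` during
the first `N` steps of the run. -/
def traversals [DecidableEq V] (G : SwitchGraph V) (o d : V) (N : ℕ) (v : V) (b : Bool) : ℕ :=
  ((Finset.range N).filter
    (fun n => (G.run o d n).1 = v ∧ v ≠ d ∧ (G.run o d n).2 v = b)).card

/-- Total weight on edges leaving `v`. -/
def outflow {M : Type} [AddCommMonoid M] (x : V → Bool → M) (v : V) : M :=
  x v false + x v true

/-- Total weight on edges entering `v`. -/
def inflow [Fintype V] [DecidableEq V] (G : SwitchGraph V) {M : Type} [AddCommMonoid M]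
    (x : V → Bool → M) (v : V) : M :=
  ∑ u : V, ∑ b : Bool, if G.succ u b = v then x u b else 0

/-- A switching flow: flow conservation of value 1 from `o` to `d`, together with the
balancing condition `x v true ≤ x v false ≤ x v true + 1` at every vertex. -/
def IsSwitchingFlow [Fintype V] [DecidableEq V] (G : SwitchGraph V) (o d : V)
    (x : V → Bool → ℕ) : Prop :=
  (∀ v, outflow x v + (if v = d then 1 else 0) = G.inflow x v + (if v = o then 1 else 0)) ∧
  (∀ v, x v true ≤ x v false ∧ x v false ≤ x v true + 1)

/-- The edge relation of the underlying directed graph `(V, E)`. -/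
def stepRel (G : SwitchGraph V) (a b : V) : Prop :=
  G.s0 a = b ∨ G.s1 a = b

/-- A dead end: a vertex with no directed path to `d` in `(V, E)`. -/
def DeadEnd (G : SwitchGraph V) (d w : V) : Prop :=
  ¬ Relation.ReflTransGen G.stepRel w d

/-- There is a directed walk of length `k` from `w` to `d` in `(V, E)`. -/
def Chain (G : SwitchGraph V) (w d : V) (k : ℕ) : Prop :=
  ∃ f : ℕ → V, f 0 = w ∧ f k = d ∧ ∀ i < k, G.stepRel (f i) (f (i + 1))

end SwitchGraph

open SwitchGraph

/-!
By induction on the number of steps, the run profile stays below every switching flow `x`.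
Suppose the run sits at `v ≠ d` and its active edge has already been used `x`-many times. The
switch alternates and `x` is balanced, so `x` and the run profile leave `v` equally often; but the
run has entered `v` once more than it has left it, and `x` enters `v` at least as often as the run,
contradicting conservation of `x` at `v`. A flow above the run profile with the same total sum
must then coincide with it.
-/

namespace SwitchGraph

variable {V : Type}

section Flow

variable {M : Type} [AddCommMonoid M]

lemma outflow_add (x y : V → Bool → M) (v : V) :
    outflow (x + y) v = outflow x v + outflow y v :=
  add_add_add_comm _ _ _ _

lemma outflow_indicator [DecidableEq V] (u : V) (b : Bool) (m : M) (v : V) :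
    outflow (fun w c => if w = u ∧ c = b then m else 0) v = if u = v then m else 0 := by
  by_cases hv : u = v <;> cases b <;> simp [outflow, hv, Ne.symm]

variable [Fintype V] [DecidableEq V] (G : SwitchGraph V)

lemma inflow_add (x y : V → Bool → M) (v : V) :
    G.inflow (x + y) v = G.inflow x v + G.inflow y v := by
  simp only [inflow, Pi.add_apply, ite_add_zero, Finset.sum_add_distrib]

lemma inflow_indicator (u : V) (b : Bool) (m : M) (v : V) :
    G.inflow (fun w c => if w = u ∧ c = b then m else 0) v =
      if G.succ u b = v then m else 0 := by
  rw [inflow, Finset.sum_eq_single u (fun w _ hw => by simp [hw]) (by simp), Fintype.sum_bool]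
  cases b <;> simp

lemma inflow_mono [PartialOrder M] [IsOrderedAddMonoid M] {x y : V → Bool → M} (h : x ≤ y)
    (v : V) : G.inflow x v ≤ G.inflow y v :=
  Finset.sum_le_sum fun u _ => Finset.sum_le_sum fun c _ => by split_ifs <;> simp [h u c]

end Flow

section Run

variable [DecidableEq V] (G : SwitchGraph V) (o d : V)

lemma run_succ (n : ℕ) :
    G.run o d (n + 1) =
      if (G.run o d n).1 = d then G.run o d n else G.step (G.run o d n) :=
  Function.iterate_succ_apply' _ _ _

lemma run_succ_fst_of_ne {n : ℕ} (h : (G.run o d n).1 ≠ d) :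
    (G.run o d (n + 1)).1 = G.succ (G.run o d n).1 ((G.run o d n).2 (G.run o d n).1) := by
  rw [run_succ, if_neg h, step]

lemma traversals_zero : G.traversals o d 0 = 0 := by
  ext v b
  simp [traversals]

lemma traversals_dest (n : ℕ) (b : Bool) : G.traversals o d n d b = 0 := by
  simp [traversals]

lemma traversals_succ_of_eq {n : ℕ} (h : (G.run o d n).1 = d) :
    G.traversals o d (n + 1) = G.traversals o d n := by
  ext v b
  have hn : ¬ ((G.run o d n).1 = v ∧ v ≠ d ∧ (G.run o d n).2 v = b) := by
    rintro ⟨rfl, hv, -⟩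
    exact hv h
  simp [traversals, Finset.range_add_one, Finset.filter_insert, hn]

lemma traversals_succ_of_ne {n : ℕ} (h : (G.run o d n).1 ≠ d) :
    G.traversals o d (n + 1) = G.traversals o d n +
      fun w c => if w = (G.run o d n).1 ∧ c = (G.run o d n).2 (G.run o d n).1 then 1 else 0 := by
  ext v b
  simp only [traversals, Finset.range_add_one, Finset.filter_insert, Pi.add_apply]
  by_cases hv : (G.run o d n).1 = v
  · subst hv
    by_cases hb : (G.run o d n).2 (G.run o d n).1 = b
    · simp [h, hb, Finset.card_insert_of_notMem]
    · simp [hb, Ne.symm hb]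
  · simp [hv, Ne.symm hv]

/-- The switch at `v` records the parity of the number of exits from `v`. -/
lemma traversals_false_eq {v : V} (hv : v ≠ d) (n : ℕ) :
    G.traversals o d n v false =
      G.traversals o d n v true + if (G.run o d n).2 v then 1 else 0 := by
  induction n with
  | zero => simp [traversals_zero, run]
  | succ n ih =>
    by_cases hd : (G.run o d n).1 = d
    · rwa [traversals_succ_of_eq G o d hd, run_succ, if_pos hd]
    rw [traversals_succ_of_ne G o d hd, run_succ, if_neg hd]
    by_cases hu : v = (G.run o d n).1
    · subst hu
      cases hb : (G.run o d n).2 (G.run o d n).1 <;> simp_all [step]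
    · simp [hu, step, ih]

/-- Since the switch alternates, agreeing on the active edge forces agreement on the other
edge as well. -/
lemma outflow_eq_of_traversals_eq {x : V → Bool → ℕ} {n : ℕ} {v : V} (hv : v ≠ d)
    (hbal : x v true ≤ x v false ∧ x v false ≤ x v true + 1) (hle : G.traversals o d n ≤ x)
    (htight : G.traversals o d n v ((G.run o d n).2 v) = x v ((G.run o d n).2 v)) :
    outflow x v = outflow (G.traversals o d n) v := by
  have h := G.traversals_false_eq o d hv n
  have hle_false : G.traversals o d n v false ≤ x v false := hle v false
  have hle_true : G.traversals o d n v true ≤ x v true := hle v true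
  obtain ⟨hx_lower, hx_upper⟩ := hbal
  cases hb : (G.run o d n).2 v <;>
    simp only [hb, outflow, Bool.false_eq_true, ↓reduceIte] at h htight ⊢ <;>
    omega

end Run

section Profile

variable [Fintype V] [DecidableEq V] (G : SwitchGraph V) (o d : V)

lemma inflow_traversals_add (n : ℕ) (v : V) :
    G.inflow (G.traversals o d n) v + (if v = o then 1 else 0) =
      outflow (G.traversals o d n) v + if (G.run o d n).1 = v then 1 else 0 := by
  induction n with
  | zero => simp [traversals_zero, inflow, outflow, run, eq_comm]
  | succ n ih =>
    by_cases hd : (G.run o d n).1 = d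
    · rwa [traversals_succ_of_eq G o d hd, run_succ, if_pos hd]
    rw [traversals_succ_of_ne G o d hd, inflow_add, inflow_indicator, outflow_add,
      outflow_indicator, run_succ_fst_of_ne G o d hd]
    omega

lemma isSwitchingFlow_traversals {N : ℕ} (hN : (G.run o d N).1 = d) :
    G.IsSwitchingFlow o d (G.traversals o d N) := by
  refine ⟨fun v => ?_, fun v => ?_⟩
  · have h := G.inflow_traversals_add o d N v
    simp only [hN, eq_comm (a := d)] at h
    omega
  · by_cases hv : v = d
    · simp [hv, traversals_dest]
    · have h := G.traversals_false_eq o d hv N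
      split_ifs at h <;> omega

lemma traversals_le_of_isSwitchingFlow {x : V → Bool → ℕ} (hx : G.IsSwitchingFlow o d x)
    (n : ℕ) : G.traversals o d n ≤ x := by
  induction n with
  | zero => simp [traversals_zero]
  | succ n ih =>
    by_cases hd : (G.run o d n).1 = d
    · rwa [traversals_succ_of_eq G o d hd]
    rw [traversals_succ_of_ne G o d hd]
    intro v b
    simp only [Pi.add_apply]
    split_ifs with hvb
    · obtain ⟨rfl, rfl⟩ := hvb
      refine Nat.succ_le_of_lt (lt_of_le_of_ne (ih _ _) fun htight => ?_)
      have hout := G.outflow_eq_of_traversals_eq o d hd (hx.2 _) ih htight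
      have hcons := hx.1 (G.run o d n).1
      have hrun := G.inflow_traversals_add o d n (G.run o d n).1
      have hmono := G.inflow_mono ih (G.run o d n).1
      rw [if_neg hd] at hcons
      rw [if_pos rfl] at hrun
      omega
    · simpa using ih v b

end Profile

end SwitchGraph

theorem stmt16_general {V : Type} [Fintype V] [DecidableEq V] (G : SwitchGraph V) (o d : V)
    (N : ℕ) (hN : (G.run o d N).1 = d) :
    G.IsSwitchingFlow o d (G.traversals o d N) ∧
    (∀ x, G.IsSwitchingFlow o d x → ∀ v b, G.traversals o d N v b ≤ x v b) ∧
    (∀ x, G.IsSwitchingFlow o d x →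
      (∑ v : V, ∑ b : Bool, x v b) = (∑ v : V, ∑ b : Bool, G.traversals o d N v b) →
      x = G.traversals o d N) := by
  have hle (x) (hx : G.IsSwitchingFlow o d x) : G.traversals o d N ≤ x :=
    G.traversals_le_of_isSwitchingFlow o d hx N
  refine ⟨G.isSwitchingFlow_traversals o d hN, hle, fun x hx hsum => ?_⟩
  have hrows := (Finset.sum_eq_sum_iff_of_le fun v _ =>
    Finset.sum_le_sum fun b _ => hle x hx v b).1 hsum.symm
  funext v b
  exact ((Finset.sum_eq_sum_iff_of_le fun b _ => hle x hx v b).1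
    (hrows v (Finset.mem_univ v)) b (Finset.mem_univ b)).symm

/-- If the run terminates, its run profile is a switching flow, is the least element of the
set of switching flows under the componentwise order, and is the unique switching flow of
minimum total sum. -/
theorem stmt16 {V : Type} [Fintype V] [DecidableEq V] (G : SwitchGraph V) (o d : V)
    (hod : o ≠ d) (N : ℕ) (hN : (G.run o d N).1 = d) :
    G.IsSwitchingFlow o d (G.traversals o d N) ∧
    (∀ x, G.IsSwitchingFlow o d x → ∀ v b, G.traversals o d N v b ≤ x v b) ∧
    (∀ x, G.IsSwitchingFlow o d x →
      (∑ v : V, ∑ b : Bool, x v b) = (∑ v : V, ∑ b : Bool, G.traversals o d N v b) →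
      x = G.traversals o d N) :=
  stmt16_general G o d N hN
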